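/- arXiv:1512.03832 — 2 statements merged into one kernel-verified Lean document; each statement's English description precedes it below -/
import Mathlib

section
/- With u_g the state defined by the coercive variational equality and p_g ∈ V₀ the adjoint state defined by a(p_g, v) = ⟨u_g - z_d, ι v⟩_H for all v ∈ V₀, the map g ↦ p_g (viewed in H via ι) is strictly monotone in the sense that ⟨ι p_{g₂} - ι p_{g₁}, g₂ - g₁⟩_H = ‖ι u_{g₂} - ι u_{g₁}‖²_H ≥ 0 for all g₁, g₂ ∈ H. -/
open scoped RealInnerProductSpace

/-!
Subtracting the state equations for `g₁` and `g₂` shows that `w = u g₂ - u g₁ ∈ V₀` solves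
`a w v = ⟪g₂ - g₁, ι v⟫`, and subtracting the adjoint equations shows that `q = p g₂ - p g₁`
solves `a q v = ⟪ι w, ι v⟫`. Testing the first with `q`, the second with `w`, and using the
symmetry of `a` gives `⟪ι q, g₂ - g₁⟫ = a w q = a q w = ‖ι w‖²`.
-/

section

variable {V H : Type*} [AddCommGroup V] [Module ℝ V] [NormedAddCommGroup H]
  [InnerProductSpace ℝ H]

theorem LinearMap.apply_sub_eq_inner_sub {a : V →ₗ[ℝ] V →ₗ[ℝ] ℝ} {x y v : V} {f f' w : H}
    {c : ℝ} (hx : a x v = ⟪f, w⟫ - c) (hy : a y v = ⟪f', w⟫ - c) :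
    a (x - y) v = ⟪f - f', w⟫ := by
  rw [map_sub, LinearMap.sub_apply, hx, hy, inner_sub_left]
  ring

theorem inner_eq_norm_sq_of_state_adjoint {V₀ : Submodule ℝ V} {a : V →ₗ[ℝ] V →ₗ[ℝ] ℝ}
    (ha_symm : ∀ u v : V, a u v = a v u) {ι : V → H} {f : H} {w q : V}
    (hw : w ∈ V₀) (hq : q ∈ V₀)
    (hw_eq : ∀ v ∈ V₀, a w v = ⟪f, ι v⟫) (hq_eq : ∀ v ∈ V₀, a q v = ⟪ι w, ι v⟫) :
    ⟪ι q, f⟫ = ‖ι w‖ ^ 2 := by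
  rw [real_inner_comm, ← hw_eq q hq, ha_symm, hq_eq w hw, real_inner_self_eq_norm_sq]

end

theorem adjoint_state_strictly_monotone_general
    {V H : Type*} [NormedAddCommGroup V] [InnerProductSpace ℝ V]
    [NormedAddCommGroup H] [InnerProductSpace ℝ H]
    (V₀ : Submodule ℝ V)
    (a : V →ₗ[ℝ] V →ₗ[ℝ] ℝ)
    (ha_symm : ∀ u v : V, a u v = a v u)
    (ι : V →L[ℝ] H) (L : V →L[ℝ] ℝ) (b : V) (zd : H)
    (u : H → V) (p : H → V)
    (hu_mem : ∀ g : H, u g - b ∈ V₀)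
    (hu_eq : ∀ g : H, ∀ v ∈ V₀, a (u g) v = ⟪g, ι v⟫ - L v)
    (hp_mem : ∀ g : H, p g ∈ V₀)
    (hp_eq : ∀ g : H, ∀ v ∈ V₀, a (p g) v = ⟪ι (u g) - zd, ι v⟫) :
    ∀ g₁ g₂ : H,
      ⟪ι (p g₂) - ι (p g₁), g₂ - g₁⟫ = ‖ι (u g₂) - ι (u g₁)‖ ^ 2 ∧
      (0 : ℝ) ≤ ⟪ι (p g₂) - ι (p g₁), g₂ - g₁⟫ := by
  intro g₁ g₂
  have hw : u g₂ - u g₁ ∈ V₀ := by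
    simpa using V₀.sub_mem (hu_mem g₂) (hu_mem g₁)
  have hp_eq' (g : H) (v : V) (hv : v ∈ V₀) : a (p g) v = ⟪ι (u g), ι v⟫ - ⟪zd, ι v⟫ := by
    rw [hp_eq g v hv, inner_sub_left]
  have key : ⟪ι (p g₂ - p g₁), g₂ - g₁⟫ = ‖ι (u g₂ - u g₁)‖ ^ 2 :=
    inner_eq_norm_sq_of_state_adjoint ha_symm hw (V₀.sub_mem (hp_mem g₂) (hp_mem g₁))
      (fun v hv ↦ LinearMap.apply_sub_eq_inner_sub (hu_eq g₂ v hv) (hu_eq g₁ v hv))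
      (fun v hv ↦ ι.map_sub _ _ ▸
        LinearMap.apply_sub_eq_inner_sub (hp_eq' g₂ v hv) (hp_eq' g₁ v hv))
  rw [map_sub, map_sub] at key
  exact ⟨key, key ▸ sq_nonneg _⟩

/-- strict monotonicity of the adjoint-state map:
`⟪ι p_{g₂} - ι p_{g₁}, g₂ - g₁⟫ = ‖ι u_{g₂} - ι u_{g₁}‖² ≥ 0`. -/
theorem adjoint_state_strictly_monotone
    {V H : Type*} [NormedAddCommGroup V] [InnerProductSpace ℝ V] [CompleteSpace V]
    [NormedAddCommGroup H] [InnerProductSpace ℝ H] [CompleteSpace H]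
    (V₀ : Submodule ℝ V) (hV₀ : IsClosed (V₀ : Set V))
    (a : V →ₗ[ℝ] V →ₗ[ℝ] ℝ) (Ca : ℝ)
    (ha_cont : ∀ u v : V, |a u v| ≤ Ca * ‖u‖ * ‖v‖)
    (ha_symm : ∀ u v : V, a u v = a v u)
    (l : ℝ) (hl : 0 < l)
    (ha_coerc : ∀ v ∈ V₀, l * ‖v‖ ^ 2 ≤ a v v)
    (ι : V →L[ℝ] H) (L : V →L[ℝ] ℝ) (b : V) (zd : H)
    (u : H → V) (p : H → V)
    (hu_mem : ∀ g : H, u g - b ∈ V₀)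
    (hu_eq : ∀ g : H, ∀ v ∈ V₀, a (u g) v = ⟪g, ι v⟫ - L v)
    (hp_mem : ∀ g : H, p g ∈ V₀)
    (hp_eq : ∀ g : H, ∀ v ∈ V₀, a (p g) v = ⟪ι (u g) - zd, ι v⟫) :
    ∀ g₁ g₂ : H,
      ⟪ι (p g₂) - ι (p g₁), g₂ - g₁⟫ = ‖ι (u g₂) - ι (u g₁)‖ ^ 2 ∧
      (0 : ℝ) ≤ ⟪ι (p g₂) - ι (p g₁), g₂ - g₁⟫ :=
  adjoint_state_strictly_monotone_general V₀ a ha_symm ι L b zd u p hu_mem hu_eq hp_mem hp_eq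
end

section
/- Let a be a continuous symmetric bilinear form on V, coercive on the closed subspace V₀ with constant λ > 0, and let a_α(u,v) = a(u,v) + α B(u,v) for α > 0, where B is a continuous symmetric positive-semidefinite bilinear form with V₀ ⊆ ker B (i.e. B(v,w) = 0 whenever v ∈ V₀). Suppose u ∈ b + V₀ satisfies a(u,v) = F(v) for all v ∈ V₀ and u_α ∈ V satisfies a_α(u_α, v) = F(v) + α B(b, v) for all v ∈ V, for a fixed bounded linear functional F. If additionally a_α is coercive on V with constant λ_α ≥ λ₁ min(1, α) > 0 and u_α ⇀ u weakly in V with B(u_α - b, u_α - b) → 0 as α → ∞, then ‖u_α - u‖_V → 0 strongly as α → +∞. -/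
open scoped RealInnerProductSpace
open Filter Topology

/-! For `α ≥ 1` the penalized form dominates `l₁ ‖·‖²`, and testing the two variational equations
against `e = u_α - u` (using `B(u, ·) = B(b, ·)`, as `u - b ∈ V₀ ⊆ ker B`) gives
`l₁ ‖e‖² ≤ a_α(e, e) = F e - a(u, e)`. The right-hand side is a bounded linear functional of `e`,
so by the Riesz representation it tends to `0` under weak convergence. -/

section WeakConvergence

variable {ι V : Type*} [NormedAddCommGroup V] [InnerProductSpace ℝ V] [CompleteSpace V]

theorem tendsto_continuousLinearMap_of_tendsto_inner {l : Filter ι} {f : ι → V} {x : V}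
    (h : ∀ v, Tendsto (fun i => ⟪f i, v⟫) l (𝓝 ⟪x, v⟫)) (g : V →L[ℝ] ℝ) :
    Tendsto (fun i => g (f i)) l (𝓝 (g x)) := by
  have hg : ∀ y, g y = ⟪y, (InnerProductSpace.toDual ℝ V).symm g⟫ := fun y => by
    rw [real_inner_comm, InnerProductSpace.toDual_symm_apply]
  simpa only [hg] using h _

end WeakConvergence

theorem tendsto_norm_zero_of_mul_sq_le {ι E : Type*} [SeminormedAddCommGroup E] {l : Filter ι}
    {f : ι → E} {g : ι → ℝ} {c : ℝ} (hc : 0 < c) (hle : ∀ᶠ i in l, c * ‖f i‖ ^ 2 ≤ g i)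
    (hg : Tendsto g l (𝓝 0)) : Tendsto (fun i => ‖f i‖) l (𝓝 0) := by
  have hsq : Tendsto (fun i => ‖f i‖ ^ 2) l (𝓝 0) := by
    refine squeeze_zero' (.of_forall fun i => by positivity) ?_ (by simpa using hg.div_const c)
    filter_upwards [hle] with i hi
    rwa [le_div_iff₀ hc, mul_comm]
  simpa using hsq.sqrt

theorem LinearMap.sub_apply_add_mul_eq_of_variational {V : Type*} [AddCommGroup V] [Module ℝ V]
    {a B : V →ₗ[ℝ] V →ₗ[ℝ] ℝ} {F : V → ℝ} {w u b v : V} {α : ℝ}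
    (hw : a w v + α * B w v = F v + α * B b v) (hB : B u v = B b v) :
    a (w - u) v + α * B (w - u) v = F v - a u v := by
  simp only [map_sub, LinearMap.sub_apply]
  linear_combination hw - α * hB

theorem strong_convergence_of_states_general
    {V : Type*} [NormedAddCommGroup V] [InnerProductSpace ℝ V] [CompleteSpace V]
    (V₀ : Submodule ℝ V)
    (b : V) (l₁ : ℝ) (hl₁ : 0 < l₁)
    (a : V →ₗ[ℝ] V →ₗ[ℝ] ℝ) (Ca : ℝ)
    (ha_cont : ∀ u v : V, |a u v| ≤ Ca * ‖u‖ * ‖v‖)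
    (B : V →ₗ[ℝ] V →ₗ[ℝ] ℝ)
    (hB_ker : ∀ v ∈ V₀, ∀ w : V, B v w = 0)
    (F : V →L[ℝ] ℝ)
    (u : V) (hu_mem : u - b ∈ V₀)
    (uα : ℝ → V)
    (huα_eq : ∀ α : ℝ, 0 < α → ∀ v : V,
      a (uα α) v + α * B (uα α) v = F v + α * B b v)
    (ha_coerc' : ∀ α : ℝ, 0 < α → ∀ v : V,
      l₁ * min 1 α * ‖v‖ ^ 2 ≤ a v v + α * B v v)
    (hweak : ∀ v : V,
      Filter.Tendsto (fun α => ⟪uα α, v⟫) Filter.atTop (nhds ⟪u, v⟫)) :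
    Filter.Tendsto (fun α => ‖uα α - u‖) Filter.atTop (nhds 0) := by
  set g : V →L[ℝ] ℝ := F - (a u).mkContinuous (Ca * ‖u‖) fun v => by
    simpa only [Real.norm_eq_abs, mul_assoc] using ha_cont u v
  have hBu : ∀ v, B u v = B b v := fun v => by
    simpa only [map_sub, LinearMap.sub_apply, sub_eq_zero] using hB_ker _ hu_mem v
  have henergy : ∀ α, 1 ≤ α → l₁ * ‖uα α - u‖ ^ 2 ≤ g (uα α - u) := fun α hα₁ => by
    have hα : 0 < α := one_pos.trans_le hα₁
    have hcoerc := ha_coerc' α hα (uα α - u)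
    rw [min_eq_left hα₁, mul_one,
      LinearMap.sub_apply_add_mul_eq_of_variational (huα_eq α hα _) (hBu _)] at hcoerc
    exact hcoerc
  have hg : Tendsto (fun α => g (uα α - u)) atTop (𝓝 0) := by
    simpa only [map_sub, sub_self] using
      (tendsto_continuousLinearMap_of_tendsto_inner hweak g).sub_const (g u)
  exact tendsto_norm_zero_of_mul_sq_le hl₁ ((eventually_ge_atTop 1).mono henergy) hg

/-- strong convergence `u_α → u` in `V` as `α → +∞`, given weak
convergence and vanishing of the penalization term. -/
theorem strong_convergence_of_states
    {V : Type*} [NormedAddCommGroup V] [InnerProductSpace ℝ V] [CompleteSpace V]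
    (V₀ : Submodule ℝ V) (hV₀ : IsClosed (V₀ : Set V))
    (b : V) (l l₁ : ℝ) (hl : 0 < l) (hl₁ : 0 < l₁)
    (a : V →ₗ[ℝ] V →ₗ[ℝ] ℝ) (Ca : ℝ)
    (ha_cont : ∀ u v : V, |a u v| ≤ Ca * ‖u‖ * ‖v‖)
    (ha_symm : ∀ u v : V, a u v = a v u)
    (ha_coerc : ∀ v ∈ V₀, l * ‖v‖ ^ 2 ≤ a v v)
    (B : V →ₗ[ℝ] V →ₗ[ℝ] ℝ) (CB : ℝ)
    (hB_cont : ∀ u v : V, |B u v| ≤ CB * ‖u‖ * ‖v‖)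
    (hB_symm : ∀ u v : V, B u v = B v u)
    (hB_pos : ∀ v : V, 0 ≤ B v v)
    (hB_ker : ∀ v ∈ V₀, ∀ w : V, B v w = 0)
    (F : V →L[ℝ] ℝ)
    (u : V) (hu_mem : u - b ∈ V₀)
    (hu_eq : ∀ v ∈ V₀, a u v = F v)
    (uα : ℝ → V)
    (huα_eq : ∀ α : ℝ, 0 < α → ∀ v : V,
      a (uα α) v + α * B (uα α) v = F v + α * B b v)
    (ha_coerc' : ∀ α : ℝ, 0 < α → ∀ v : V,
      l₁ * min 1 α * ‖v‖ ^ 2 ≤ a v v + α * B v v)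
    (hweak : ∀ v : V,
      Filter.Tendsto (fun α => ⟪uα α, v⟫) Filter.atTop (nhds ⟪u, v⟫))
    (hpen : Filter.Tendsto (fun α => B (uα α - b) (uα α - b))
      Filter.atTop (nhds 0)) :
    Filter.Tendsto (fun α => ‖uα α - u‖) Filter.atTop (nhds 0) :=
  strong_convergence_of_states_general V₀ b l₁ hl₁ a Ca ha_cont B hB_ker F u hu_mem uα huα_eq
    ha_coerc' hweak
end
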